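/- Let K be a simplicial complex on Fin n, d : ℕ, 𝒦 a finite type of colors, κ an anti-coloring of X_d(K), and π : X_{d+1}(K) → ι a map presenting a partition of X_{d+1}(K). Then the following are equivalent: (1) the anti-synchrony subspace Δ_κ ⊆ C_d(K) is invariant under the map θ ↦ B_{d+1}^K (f ((B_{d+1}^K)ᵀ θ)) for every f ∈ CW(π); (2) κ is up-balanced with respect to π. -/
import Mathlib


open Finset

/-- A simplicial complex on the vertex set `Fin n`: a set of nonempty finsets closed under
taking nonempty subsets. -/
def IsSimplicialCx {n : ℕ} (𝒦 : Set (Finset (Fin n))) : Prop :=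
  (∀ s ∈ 𝒦, s.Nonempty) ∧ ∀ s ∈ 𝒦, ∀ t ⊆ s, t.Nonempty → t ∈ 𝒦

/-- `X_d(𝒦)`: the `d`-simplices of `𝒦`, i.e. the members of `𝒦` of cardinality `d + 1`. -/
abbrev Cell (n d : ℕ) (𝒦 : Set (Finset (Fin n))) : Type :=
  {s : Finset (Fin n) // s ∈ 𝒦 ∧ s.card = d + 1}

noncomputable instance (n d : ℕ) (𝒦 : Set (Finset (Fin n))) : Fintype (Cell n d 𝒦) :=
  Fintype.ofFinite _

/-- The incidence sign `I_e^t`: equals `(-1)^k` if `e = t.erase i_k` where `i_k` is the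
`(k+1)`-st smallest element of `t`, and `0` otherwise. -/
noncomputable def isign {n : ℕ} (t e : Finset (Fin n)) : ℤ :=
  ∑ k : Fin t.card, if e = t.erase (t.orderIsoOfFin rfl k : Fin n) then (-1) ^ (k : ℕ) else 0

/-- The boundary map `B_{d+1} : C_{d+1}(𝒦) → C_d(𝒦)`, `(B x)_e = Σ_t I_e^t x_t`. -/
noncomputable def bMap {n : ℕ} (𝒦 : Set (Finset (Fin n))) (d : ℕ)
    (x : Cell n (d + 1) 𝒦 → ℝ) : Cell n d 𝒦 → ℝ :=
  fun e => ∑ t : Cell n (d + 1) 𝒦, (isign t.1 e.1 : ℝ) * x t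

/-- The transpose (adjoint) boundary map `B_{d+1}ᵀ : C_d(𝒦) → C_{d+1}(𝒦)`,
`(Bᵀ y)_t = Σ_e I_e^t y_e`. -/
noncomputable def bMapT {n : ℕ} (𝒦 : Set (Finset (Fin n))) (d : ℕ)
    (y : Cell n d 𝒦 → ℝ) : Cell n (d + 1) 𝒦 → ℝ :=
  fun t => ∑ e : Cell n d 𝒦, (isign t.1 e.1 : ℝ) * y e

/-- An anti-coloring of the `d`-simplices: each value is `0`, a color `k`, or a negated
color `-k` in the free `ℤ`-module `𝒞 →₀ ℤ` on the set of colors `𝒞`. -/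
def IsAntiColoring {n d : ℕ} {𝒦 : Set (Finset (Fin n))} {𝒞 : Type*}
    (κ : Cell n d 𝒦 → (𝒞 →₀ ℤ)) : Prop :=
  ∀ e : Cell n d 𝒦, κ e = 0 ∨
    ∃ k : 𝒞, κ e = Finsupp.single k 1 ∨ κ e = -Finsupp.single k 1

/-- The induced anti-coloring `κ↑` on the `(d+1)`-simplices:
`κ↑(t) = Σ_{e ∈ X_d(𝒦)} I_e^t • κ(e)`. -/
noncomputable def kappaUp {n d : ℕ} (𝒦 : Set (Finset (Fin n))) {𝒞 : Type*}
    (κ : Cell n d 𝒦 → (𝒞 →₀ ℤ)) : Cell n (d + 1) 𝒦 → (𝒞 →₀ ℤ) :=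
  fun t => ∑ e : Cell n d 𝒦, isign t.1 e.1 • κ e

open Classical in
/-- The signed count `Σ_{t ∈ P_i, κ↑(t) = a} I_e^t − Σ_{t ∈ P_i, κ↑(t) = −a} I_e^t`. -/
noncomputable def upSum {n d : ℕ} (𝒦 : Set (Finset (Fin n))) {𝒞 ι : Type*}
    (κ : Cell n d 𝒦 → (𝒞 →₀ ℤ)) (π : Cell n (d + 1) 𝒦 → ι)
    (i : ι) (a : 𝒞 →₀ ℤ) (e : Cell n d 𝒦) : ℤ :=
  (∑ t : Cell n (d + 1) 𝒦,
      if π t = i ∧ kappaUp 𝒦 κ t = a then isign t.1 e.1 else 0) -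
  (∑ t : Cell n (d + 1) 𝒦,
      if π t = i ∧ kappaUp 𝒦 κ t = -a then isign t.1 e.1 else 0)

/-- `κ` is up-balanced with respect to the partition `π` of the `(d+1)`-simplices. -/
def UpBalanced {n d : ℕ} (𝒦 : Set (Finset (Fin n))) {𝒞 ι : Type*}
    (κ : Cell n d 𝒦 → (𝒞 →₀ ℤ)) (π : Cell n (d + 1) 𝒦 → ι) : Prop :=
  ∀ e f : Cell n d 𝒦,
    (κ e = κ f → ∀ (i : ι) (a : 𝒞 →₀ ℤ), upSum 𝒦 κ π i a e = upSum 𝒦 κ π i a f) ∧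
    (κ e = -κ f → ∀ (i : ι) (a : 𝒞 →₀ ℤ), upSum 𝒦 κ π i a e = -upSum 𝒦 κ π i a f)

/-- The anti-synchrony subspace `Δ_κ ⊆ C_d(𝒦)` of an anti-coloring `κ`. -/
def antiSync {n d : ℕ} (𝒦 : Set (Finset (Fin n))) {𝒞 : Type*}
    (κ : Cell n d 𝒦 → (𝒞 →₀ ℤ)) : Set (Cell n d 𝒦 → ℝ) :=
  {x | ∀ e f : Cell n d 𝒦, (κ e = κ f → x e = x f) ∧ (κ e = -κ f → x e = -x f)}


section Aux

open Finset

variable {n d : ℕ} {𝒦 : Set (Finset (Fin n))} {𝒞 : Type*} [Fintype 𝒞] {ι : Type*}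

/-- The linear functional on `𝒞 →₀ ℤ` with coefficients `c`. -/
noncomputable def lcomb (c : 𝒞 → ℝ) (a : 𝒞 →₀ ℤ) : ℝ :=
  ∑ k : 𝒞, (a k : ℝ) * c k

lemma lcomb_neg (c : 𝒞 → ℝ) (a : 𝒞 →₀ ℤ) : lcomb c (-a) = -lcomb c a := by
  simp [lcomb, neg_mul, Finset.sum_neg_distrib]

lemma lcomb_sub (c : 𝒞 → ℝ) (a b : 𝒞 →₀ ℤ) : lcomb c (a - b) = lcomb c a - lcomb c b := by
  simp only [lcomb, Finsupp.sub_apply, Int.cast_sub, sub_mul, Finset.sum_sub_distrib]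

lemma lcomb_zero (c : 𝒞 → ℝ) : lcomb c 0 = 0 := by simp [lcomb]

lemma lcomb_single [DecidableEq 𝒞] (c : 𝒞 → ℝ) (k : 𝒞) :
    lcomb c (Finsupp.single k 1) = c k := by
  classical
  simp only [lcomb, Finsupp.single_apply]
  rw [Finset.sum_congr rfl (fun k' _ => ?_), Finset.sum_ite_eq Finset.univ k c]
  · simp
  · split_ifs <;> simp_all

lemma lcomb_sum_zsmul {α : Type*} (c : 𝒞 → ℝ) (s : Finset α) (m : α → ℤ)
    (v : α → 𝒞 →₀ ℤ) :
    lcomb c (∑ e ∈ s, m e • v e) = ∑ e ∈ s, (m e : ℝ) * lcomb c (v e) := by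
  simp only [lcomb, Finsupp.finset_sum_apply, Finsupp.smul_apply, smul_eq_mul,
    Int.cast_sum, Int.cast_mul, Finset.sum_mul, Finset.mul_sum]
  rw [Finset.sum_comm]
  exact Finset.sum_congr rfl fun e _ => Finset.sum_congr rfl fun k _ => by ring

lemma bMapT_lcomb (c : 𝒞 → ℝ) (κ : Cell n d 𝒦 → (𝒞 →₀ ℤ)) (θ : Cell n d 𝒦 → ℝ)
    (hθ : ∀ e, θ e = lcomb c (κ e)) (t : Cell n (d + 1) 𝒦) :
    bMapT 𝒦 d θ t = lcomb c (kappaUp 𝒦 κ t) := by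
  rw [bMapT, kappaUp, lcomb_sum_zsmul]
  exact Finset.sum_congr rfl fun e _ => by rw [hθ e]

/-- The key computation: for `θ = lcomb c ∘ κ` and an odd family `F`, twice the `e`-component
of `B (F ∘ Bᵀ θ)` is a linear combination of the `upSum`s at `e`. -/
lemma key_identity [DecidableEq ι] [DecidableEq (𝒞 →₀ ℤ)]
    (c : 𝒞 → ℝ) (κ : Cell n d 𝒦 → (𝒞 →₀ ℤ)) (π : Cell n (d + 1) 𝒦 → ι)
    (F : ι → ℝ → ℝ) (hF : ∀ i r, F i (-r) = -F i r)
    (θ : Cell n d 𝒦 → ℝ) (hθ : ∀ e, θ e = lcomb c (κ e)) (e : Cell n d 𝒦) :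
    2 * bMap 𝒦 d (fun t => F (π t) (bMapT 𝒦 d θ t)) e =
      ∑ i ∈ Finset.image π Finset.univ,
        ∑ a ∈ (Finset.image (kappaUp 𝒦 κ) Finset.univ ∪
            Finset.image (fun t => -kappaUp 𝒦 κ t) Finset.univ),
          F i (lcomb c a) * (upSum 𝒦 κ π i a e : ℝ) := by
  classical
  set A : Finset (𝒞 →₀ ℤ) := Finset.image (kappaUp 𝒦 κ) Finset.univ ∪
      Finset.image (fun t => -kappaUp 𝒦 κ t) Finset.univ with hA
  have hAneg : ∀ a ∈ A, -a ∈ A := by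
    intro a ha
    simp only [hA, Finset.mem_union, Finset.mem_image, Finset.mem_univ, true_and] at ha ⊢
    rcases ha with ⟨t, rfl⟩ | ⟨t, rfl⟩
    · exact Or.inr ⟨t, rfl⟩
    · exact Or.inl ⟨t, by simp⟩
  set N : (𝒞 →₀ ℤ) → ι → ℝ := fun a i =>
    ∑ t : Cell n (d + 1) 𝒦,
      if π t = i ∧ kappaUp 𝒦 κ t = a then (isign t.1 e.1 : ℝ) else 0 with hN
  have hgroup : bMap 𝒦 d (fun t => F (π t) (bMapT 𝒦 d θ t)) e =
      ∑ i ∈ Finset.image π Finset.univ, ∑ a ∈ A, F i (lcomb c a) * N a i := by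
    rw [bMap]
    have : ∀ t : Cell n (d + 1) 𝒦,
        (isign t.1 e.1 : ℝ) * F (π t) (bMapT 𝒦 d θ t) =
        ∑ i ∈ Finset.image π Finset.univ, ∑ a ∈ A,
          (if π t = i ∧ kappaUp 𝒦 κ t = a then F i (lcomb c a) * (isign t.1 e.1 : ℝ)
            else 0) := by
      intro t
      rw [Finset.sum_comm]
      have h1 : ∀ a ∈ A,
          (∑ i ∈ Finset.image π Finset.univ,
            if π t = i ∧ kappaUp 𝒦 κ t = a then F i (lcomb c a) * (isign t.1 e.1 : ℝ)
              else 0) =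
          if kappaUp 𝒦 κ t = a then F (π t) (lcomb c a) * (isign t.1 e.1 : ℝ) else 0 := by
        intro a _
        rw [Finset.sum_congr rfl (fun i _ => ?_), Finset.sum_ite_eq (Finset.image π Finset.univ)
          (π t) (fun i => if kappaUp 𝒦 κ t = a then F i (lcomb c a) * (isign t.1 e.1 : ℝ) else 0)]
        · simp
        · by_cases h1 : π t = i <;> by_cases h2 : kappaUp 𝒦 κ t = a <;>
            simp [h1, h2]
      rw [Finset.sum_congr rfl h1, Finset.sum_ite_eq A (kappaUp 𝒦 κ t)
        (fun a => F (π t) (lcomb c a) * (isign t.1 e.1 : ℝ))]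
      have hmem : kappaUp 𝒦 κ t ∈ A := by
        simp only [hA, Finset.mem_union, Finset.mem_image, Finset.mem_univ, true_and]
        exact Or.inl ⟨t, rfl⟩
      rw [if_pos hmem, bMapT_lcomb c κ θ hθ t]
      ring
    rw [Finset.sum_congr rfl (fun t _ => this t), Finset.sum_comm]
    refine Finset.sum_congr rfl fun i _ => ?_
    rw [Finset.sum_comm]
    refine Finset.sum_congr rfl fun a _ => ?_
    rw [hN, Finset.mul_sum]
    refine Finset.sum_congr rfl fun t _ => ?_
    split_ifs <;> ring
  have hflip : ∀ i, (∑ a ∈ A, F i (lcomb c a) * N a i) =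
      ∑ a ∈ A, -(F i (lcomb c a) * N (-a) i) := by
    intro i
    refine Finset.sum_nbij' (fun a => -a) (fun a => -a) ?_ ?_ (by simp) (by simp) ?_
    · intro a ha; exact hAneg a ha
    · intro a ha; exact hAneg a ha
    · intro a _
      rw [neg_neg, lcomb_neg, hF]; ring
  have hup : ∀ i a, (upSum 𝒦 κ π i a e : ℝ) = N a i - N (-a) i := by
    intro i a
    simp only [upSum, hN]
    push_cast
    congr 1 <;> exact Finset.sum_congr rfl fun t _ => by split_ifs <;> simp
  have h2 : ∀ i, 2 * (∑ a ∈ A, F i (lcomb c a) * N a i)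
      = ∑ a ∈ A, F i (lcomb c a) * (upSum 𝒦 κ π i a e : ℝ) := by
    intro i
    rw [two_mul]
    nth_rewrite 2 [hflip i]
    rw [← Finset.sum_add_distrib]
    refine Finset.sum_congr rfl fun a _ => ?_
    rw [hup]; ring
  rw [hgroup, Finset.mul_sum]
  exact Finset.sum_congr rfl fun i _ => h2 i


/-- With coefficients powers of a transcendental number, `lcomb` is injective. -/
lemma lcomb_injective_of_transcendental (x : ℝ) (hx : Transcendental ℤ x)
    (ee : 𝒞 → ℕ) (hee : Function.Injective ee) :
    Function.Injective (lcomb (fun k => x ^ ee k)) := by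
  classical
  have hzero : ∀ w : 𝒞 →₀ ℤ, lcomb (fun k => x ^ ee k) w = 0 → w = 0 := by
    intro w hw
    by_contra hw0
    obtain ⟨k0, hk0⟩ : ∃ k0, w k0 ≠ 0 := by
      by_contra h
      push_neg at h
      exact hw0 (Finsupp.ext h)
    set p : Polynomial ℤ := ∑ k : 𝒞, Polynomial.C (w k) * Polynomial.X ^ ee k with hp
    have hpne : p ≠ 0 := by
      intro h
      have hco : p.coeff (ee k0) = 0 := by rw [h]; simp
      rw [hp, Polynomial.finset_sum_coeff] at hco
      simp only [Polynomial.coeff_C_mul, Polynomial.coeff_X_pow, mul_ite, mul_one,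
        mul_zero] at hco
      rw [Finset.sum_congr rfl (fun k _ => ?_), Finset.sum_ite_eq' Finset.univ k0
        (fun k => w k)] at hco
      · simp only [Finset.mem_univ, if_true] at hco
        exact hk0 hco
      · by_cases h' : k = k0
        · subst h'; simp
        · have hne : ee k0 ≠ ee k := fun h'' => h' (hee h'').symm
          simp [h', hne]
    have hev : (Polynomial.aeval x) p = 0 := by
      rw [hp, map_sum, ← hw, lcomb]
      refine Finset.sum_congr rfl fun k _ => ?_
      simp [Polynomial.aeval_C]
    exact hx ⟨p, hpne, hev⟩
  intro a b hab
  have h0 : lcomb (fun k => x ^ ee k) (a - b) = 0 := by rw [lcomb_sub, hab, sub_self]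
  exact sub_eq_zero.mp (hzero _ h0)

end Aux

/-- **Classification of invariant anti-synchrony spaces (up-coupling).**  For an anti-coloring
`κ` of the `d`-simplices and a partition `π` of the `(d+1)`-simplices, the anti-synchrony
space `Δ_κ` is invariant under `θ ↦ B_{d+1} (f (B_{d+1}ᵀ θ))` for every `f ∈ CW(π)`
(componentwise maps with odd components constant on the classes of `π`) if and only if `κ` is
up-balanced with respect to `π`. -/
theorem antiSync_invariant_iff_upBalanced {n d : ℕ} (𝒦 : Set (Finset (Fin n)))
    (hK : IsSimplicialCx 𝒦) (𝒞 : Type*) [Fintype 𝒞] {ι : Type*}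
    (κ : Cell n d 𝒦 → (𝒞 →₀ ℤ)) (hκ : IsAntiColoring κ)
    (π : Cell n (d + 1) 𝒦 → ι) :
    (∀ f : (Cell n (d + 1) 𝒦 → ℝ) → (Cell n (d + 1) 𝒦 → ℝ),
      (∃ F : ι → ℝ → ℝ, (∀ (i : ι) (r : ℝ), F i (-r) = -F i r) ∧
        ∀ (x : Cell n (d + 1) 𝒦 → ℝ) (t : Cell n (d + 1) 𝒦), f x t = F (π t) (x t)) →
      ∀ θ ∈ antiSync 𝒦 κ, bMap 𝒦 d (f (bMapT 𝒦 d θ)) ∈ antiSync 𝒦 κ) ↔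
    UpBalanced 𝒦 κ π := by
  classical
  constructor
  · -- invariance implies up-balanced
    intro hInv e f'
    obtain ⟨c, hinj⟩ : ∃ c : 𝒞 → ℝ, Function.Injective (lcomb c) :=
      ⟨fun k => liouvilleNumber 3 ^ (Fintype.equivFin 𝒞 k : ℕ),
        lcomb_injective_of_transcendental _ (transcendental_liouvilleNumber (by norm_num))
          _ (fun a b h => (Fintype.equivFin 𝒞).injective (Fin.val_injective h))⟩
    set θ : Cell n d 𝒦 → ℝ := fun e => lcomb c (κ e) with hθdef
    have hθmem : θ ∈ antiSync 𝒦 κ := by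
      intro e1 e2
      exact ⟨fun h => by simp only [hθdef, h],
        fun h => by simp only [hθdef, h, lcomb_neg]⟩
    have main : ∀ (i : ι) (a : 𝒞 →₀ ℤ),
        ∃ F : ι → ℝ → ℝ, (∀ j r, F j (-r) = -F j r) ∧
          ∀ e'' : Cell n d 𝒦,
            bMap 𝒦 d (fun t => F (π t) (bMapT 𝒦 d θ t)) e'' =
              (upSum 𝒦 κ π i a e'' : ℝ) := by
      intro i a
      refine ⟨fun j r => if j = i then
          ((if r = lcomb c a then (1:ℝ) else 0) - (if r = -lcomb c a then 1 else 0))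
          else 0, ?_, ?_⟩
      · intro j r
        by_cases hj : j = i
        · simp only [if_pos hj]
          rw [if_congr neg_eq_iff_eq_neg rfl rfl, if_congr neg_inj rfl rfl]
          ring
        · simp [hj]
      · intro e''
        have hpt : ∀ t : Cell n (d + 1) 𝒦,
            (isign t.1 e''.1 : ℝ) * (if π t = i then
              ((if bMapT 𝒦 d θ t = lcomb c a then (1:ℝ) else 0)
                - (if bMapT 𝒦 d θ t = -lcomb c a then 1 else 0)) else 0)
            = (if π t = i ∧ kappaUp 𝒦 κ t = a then (isign t.1 e''.1 : ℝ) else 0)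
              - (if π t = i ∧ kappaUp 𝒦 κ t = -a then (isign t.1 e''.1 : ℝ) else 0) := by
          intro t
          rw [bMapT_lcomb c κ θ (fun e => by rw [hθdef]) t]
          have e1 : (lcomb c (kappaUp 𝒦 κ t) = lcomb c a) ↔ kappaUp 𝒦 κ t = a :=
            ⟨fun h => hinj h, fun h => by rw [h]⟩
          have e2 : (lcomb c (kappaUp 𝒦 κ t) = -lcomb c a) ↔ kappaUp 𝒦 κ t = -a := by
            rw [← lcomb_neg]
            exact ⟨fun h => hinj h, fun h => by rw [h]⟩
          simp only [e1, e2]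
          by_cases h1 : π t = i <;> by_cases h2 : kappaUp 𝒦 κ t = a <;>
            by_cases h3 : kappaUp 𝒦 κ t = -a <;> simp [h1, h2, h3] <;>
            (try split_ifs) <;> (try ring)
        calc bMap 𝒦 d (fun t => (fun j r => if j = i then
              ((if r = lcomb c a then (1:ℝ) else 0) - (if r = -lcomb c a then 1 else 0))
              else 0) (π t) (bMapT 𝒦 d θ t)) e''
            = ∑ t : Cell n (d + 1) 𝒦, (isign t.1 e''.1 : ℝ) * (if π t = i then
                ((if bMapT 𝒦 d θ t = lcomb c a then (1:ℝ) else 0)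
                  - (if bMapT 𝒦 d θ t = -lcomb c a then 1 else 0)) else 0) := rfl
          _ = ∑ t : Cell n (d + 1) 𝒦,
                ((if π t = i ∧ kappaUp 𝒦 κ t = a then (isign t.1 e''.1 : ℝ) else 0)
                  - (if π t = i ∧ kappaUp 𝒦 κ t = -a then (isign t.1 e''.1 : ℝ) else 0)) :=
              Finset.sum_congr rfl fun t _ => hpt t
          _ = (upSum 𝒦 κ π i a e'' : ℝ) := by
              simp only [upSum]
              push_cast
              rw [Finset.sum_sub_distrib]
    refine ⟨fun hef i a => ?_, fun hef i a => ?_⟩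
    · obtain ⟨F, hFodd, hval⟩ := main i a
      have hx := hInv (fun x t => F (π t) (x t)) ⟨F, hFodd, fun x t => rfl⟩ θ hθmem
      have h : bMap 𝒦 d (fun t => F (π t) (bMapT 𝒦 d θ t)) e =
          bMap 𝒦 d (fun t => F (π t) (bMapT 𝒦 d θ t)) f' := (hx e f').1 hef
      rw [hval e, hval f'] at h
      exact_mod_cast h
    · obtain ⟨F, hFodd, hval⟩ := main i a
      have hx := hInv (fun x t => F (π t) (x t)) ⟨F, hFodd, fun x t => rfl⟩ θ hθmem
      have h : bMap 𝒦 d (fun t => F (π t) (bMapT 𝒦 d θ t)) e =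
          -bMap 𝒦 d (fun t => F (π t) (bMapT 𝒦 d θ t)) f' := (hx e f').2 hef
      rw [hval e, hval f'] at h
      exact_mod_cast h
  · -- up-balanced implies invariance
    intro hUB f hf θ hθ
    obtain ⟨F, hFodd, hfF⟩ := hf
    have hfun : f (bMapT 𝒦 d θ) = fun t => F (π t) (bMapT 𝒦 d θ t) := funext fun t => hfF _ t
    rw [hfun]
    -- construct coefficients c with θ = lcomb c ∘ κ
    set c : 𝒞 → ℝ := fun k =>
      if h : ∃ e, κ e = Finsupp.single k 1 then θ h.choose
      else if h2 : ∃ e, κ e = -Finsupp.single k 1 then -θ h2.choose else 0 with hc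
    have hθc : ∀ e, θ e = lcomb c (κ e) := by
      intro e
      rcases hκ e with h0 | ⟨k, hk | hk⟩
      · have := (hθ e e).2 (by rw [h0, neg_zero])
        rw [h0, lcomb_zero]; linarith
      · rw [hk, lcomb_single]
        have hex : ∃ e', κ e' = Finsupp.single k 1 := ⟨e, hk⟩
        rw [hc]
        simp only [dif_pos hex]
        exact (hθ e hex.choose).1 (by rw [hk, hex.choose_spec])
      · rw [hk, lcomb_neg, lcomb_single, hc]
        by_cases hex : ∃ e', κ e' = Finsupp.single k 1
        · simp only [dif_pos hex]
          have := (hθ e hex.choose).2 (by rw [hk, hex.choose_spec])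
          linarith
        · have hex2 : ∃ e', κ e' = -Finsupp.single k 1 := ⟨e, hk⟩
          simp only [dif_neg hex, dif_pos hex2]
          have := (hθ e hex2.choose).1 (by rw [hk, hex2.choose_spec])
          linarith
    intro e f'
    have hkey := fun e'' => key_identity c κ π F hFodd θ hθc e''
    constructor
    · intro hef
      have h1 := hkey e
      have h2 := hkey f'
      have hs : ∀ i a, upSum 𝒦 κ π i a e = upSum 𝒦 κ π i a f' :=
        fun i a => (hUB e f').1 hef i a
      have : (2:ℝ) * bMap 𝒦 d (fun t => F (π t) (bMapT 𝒦 d θ t)) e =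
          2 * bMap 𝒦 d (fun t => F (π t) (bMapT 𝒦 d θ t)) f' := by
        rw [h1, h2]
        exact Finset.sum_congr rfl fun i _ => Finset.sum_congr rfl fun a _ => by rw [hs i a]
      linarith
    · intro hef
      have h1 := hkey e
      have h2 := hkey f'
      have hs : ∀ i a, upSum 𝒦 κ π i a e = -upSum 𝒦 κ π i a f' :=
        fun i a => (hUB e f').2 hef i a
      have : (2:ℝ) * bMap 𝒦 d (fun t => F (π t) (bMapT 𝒦 d θ t)) e =
          -(2 * bMap 𝒦 d (fun t => F (π t) (bMapT 𝒦 d θ t)) f') := by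
        rw [h1, h2, ← Finset.sum_neg_distrib]
        refine Finset.sum_congr rfl fun i _ => ?_
        rw [← Finset.sum_neg_distrib]
        refine Finset.sum_congr rfl fun a _ => ?_
        rw [hs i a]
        push_cast
        ring
      linarith
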